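/- arXiv:0708.1556 — 2 statements merged into one kernel-verified Lean document; each statement's English description precedes it below -/
import Mathlib

section
/- (Differentiation under the integral sign) Let E be a sequentially complete Hausdorff real locally convex topological vector space, let I = [0,1], and let Γ : I → E^I be such that: (i) Γ is continuous from I into E^I with the product (pointwise convergence) topology; (ii) for every (s,t) ∈ I × I the curve Γ(s) : I → E is differentiable at t to a unique element g(s,t) ∈ E; and (iii) the map g : I × I → E is continuous. Define c : I → E by letting c(t) be the Riemann integral over s ∈ [0,1] of Γ(s)(t) (which exists). Then for every t ∈ I, the curve c is differentiable at t to the Riemann integral over s ∈ [0,1] of g(s,t); in particular c is a standard differentiable curve in E. -/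
open Set Filter Topology

/-- The Kelleyfication of a topology `T`: a set is open iff its trace on every `T`-compact
set agrees with the trace of some `T`-open set. -/
def Kelley {X : Type*} (T : TopologicalSpace X) : TopologicalSpace X where
  IsOpen U := ∀ K : Set X, @IsCompact X T K → ∃ V : Set X, T.IsOpen V ∧ U ∩ K = V ∩ K
  isOpen_univ K _ := ⟨univ, T.isOpen_univ, rfl⟩
  isOpen_inter := by
    intro s t hs ht K hK
    obtain ⟨Vs, hVs, hsK⟩ := hs K hK
    obtain ⟨Vt, hVt, htK⟩ := ht K hK
    refine ⟨Vs ∩ Vt, T.isOpen_inter _ _ hVs hVt, ?_⟩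
    ext x
    have h1 := Set.ext_iff.mp hsK x
    have h2 := Set.ext_iff.mp htK x
    simp only [Set.mem_inter_iff] at *
    tauto
  isOpen_sUnion := by
    intro S hS K hK
    choose! V hV1 hV2 using fun t (ht : t ∈ S) => hS t ht K hK
    refine ⟨⋃ t ∈ S, V t, ?_, ?_⟩
    · letI := T
      exact isOpen_biUnion fun t ht => hV1 t ht
    · ext x
      simp only [Set.mem_inter_iff, Set.mem_sUnion, Set.mem_iUnion, exists_prop]
      constructor
      · rintro ⟨⟨t, htS, hxt⟩, hxK⟩
        have h := Set.ext_iff.mp (hV2 t htS) x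
        simp only [Set.mem_inter_iff] at h
        exact ⟨⟨t, htS, (h.mp ⟨hxt, hxK⟩).1⟩, hxK⟩
      · rintro ⟨⟨t, htS, hxt⟩, hxK⟩
        have h := Set.ext_iff.mp (hV2 t htS) x
        simp only [Set.mem_inter_iff] at h
        exact ⟨⟨t, htS, (h.mpr ⟨hxt, hxK⟩).1⟩, hxK⟩

/-- The k-extension of a topology `T`: like the Kelleyfication, but quantifying only over
`T`-closed `T`-compact sets. -/
def KelleyEx {X : Type*} (T : TopologicalSpace X) : TopologicalSpace X where
  IsOpen U := ∀ K : Set X, @IsCompact X T K → @IsClosed X T K →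
    ∃ V : Set X, T.IsOpen V ∧ U ∩ K = V ∩ K
  isOpen_univ K _ _ := ⟨univ, T.isOpen_univ, rfl⟩
  isOpen_inter := by
    intro s t hs ht K hK hKc
    obtain ⟨Vs, hVs, hsK⟩ := hs K hK hKc
    obtain ⟨Vt, hVt, htK⟩ := ht K hK hKc
    refine ⟨Vs ∩ Vt, T.isOpen_inter _ _ hVs hVt, ?_⟩
    ext x
    have h1 := Set.ext_iff.mp hsK x
    have h2 := Set.ext_iff.mp htK x
    simp only [Set.mem_inter_iff] at *
    tauto
  isOpen_sUnion := by
    intro S hS K hK hKc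
    choose! V hV1 hV2 using fun t (ht : t ∈ S) => hS t ht K hK hKc
    refine ⟨⋃ t ∈ S, V t, ?_, ?_⟩
    · letI := T
      exact isOpen_biUnion fun t ht => hV1 t ht
    · ext x
      simp only [Set.mem_inter_iff, Set.mem_sUnion, Set.mem_iUnion, exists_prop]
      constructor
      · rintro ⟨⟨t, htS, hxt⟩, hxK⟩
        have h := Set.ext_iff.mp (hV2 t htS) x
        simp only [Set.mem_inter_iff] at h
        exact ⟨⟨t, htS, (h.mp ⟨hxt, hxK⟩).1⟩, hxK⟩
      · rintro ⟨⟨t, htS, hxt⟩, hxK⟩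
        have h := Set.ext_iff.mp (hV2 t htS) x
        simp only [Set.mem_inter_iff] at h
        exact ⟨⟨t, htS, (h.mpr ⟨hxt, hxK⟩).1⟩, hxK⟩

/-- A topology is compactly generated iff it is Hausdorff and equals its Kelleyfication. -/
def IsCG {X : Type*} (T : TopologicalSpace X) : Prop :=
  @T2Space X T ∧ Kelley T = T

/-- Local compactness in the sense of the paper: every point of an open set `V` has an
open neighbourhood contained in a compact subset of `V`. -/
def LocCompact {Y : Type*} (t : TopologicalSpace Y) : Prop :=
  ∀ y : Y, ∀ V : Set Y, t.IsOpen V → y ∈ V →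
    ∃ K U : Set Y, y ∈ U ∧ t.IsOpen U ∧ U ⊆ K ∧ K ⊆ V ∧ @IsCompact Y t K

/-- A real compactly generated vector space: a compactly generated topology for which the
algebraic operations are continuous from the Kelleyfications of the product topologies. -/
def IsCGVS {X : Type*} [AddCommGroup X] [Module ℝ X] (T : TopologicalSpace X) : Prop :=
  IsCG T ∧
  Continuous[Kelley (@instTopologicalSpaceProd X X T T), T] (fun p : X × X => p.1 + p.2) ∧
  Continuous[Kelley (@instTopologicalSpaceProd ℝ X inferInstance T), T]
    (fun p : ℝ × X => p.1 • p.2)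

/-- Sequential completeness of a topologized additive group: every Cauchy sequence converges. -/
def SeqComplete {X : Type*} [AddCommGroup X] (U : TopologicalSpace X) : Prop :=
  ∀ u : ℕ → X, (∀ V ∈ @nhds X U 0, ∃ N : ℕ, ∀ m ≥ N, ∀ n ≥ N, u m - u n ∈ V) →
    ∃ x : X, Filter.Tendsto u Filter.atTop (@nhds X U x)

/-- Seip-convenient space: a compactly generated real vector space whose topology is the
Kelleyfication of a sequentially complete Hausdorff locally convex vector topology. -/
def IsSeipConvenient {X : Type*} [AddCommGroup X] [Module ℝ X] (T : TopologicalSpace X) : Prop :=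
  IsCGVS T ∧ ∃ U : TopologicalSpace X,
    @IsTopologicalAddGroup X U _ ∧ @ContinuousSMul ℝ X _ _ U ∧
    @LocallyConvexSpace ℝ X _ _ _ _ U ∧ @T2Space X U ∧ SeqComplete U ∧ T = Kelley U

/-- The compact-open topology on the full function space, generated by the usual subbasis. -/
def coTop {X Y : Type*} (tX : TopologicalSpace X) (tY : TopologicalSpace Y) :
    TopologicalSpace (X → Y) :=
  TopologicalSpace.generateFrom
    {S | ∃ (K : Set X) (V : Set Y), @IsCompact X tX K ∧ tY.IsOpen V ∧ S = {f | f '' K ⊆ V}}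

/-- `γ` is Riemann integrable to `x` on `[a,b]` with respect to the topology `T`. -/
def RiemannIntegrableTo {E : Type*} [AddCommGroup E] [Module ℝ E]
    (T : TopologicalSpace E) (a b : ℝ) (γ : ℝ → E) (x : E) : Prop :=
  ∀ V ∈ @nhds E T x, ∃ δ : ℝ, 0 < δ ∧ ∀ (k : ℕ) (t s : ℕ → ℝ),
    t 0 = a → t k = b → (∀ i < k, t i ≤ t (i + 1)) →
    (∀ i < k, t (i + 1) - t i < δ) →
    (∀ i < k, t i ≤ s i ∧ s i ≤ t (i + 1)) →
    (∑ i ∈ Finset.range k, (t (i + 1) - t i) • γ (s i)) ∈ V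

/-- `c` is differentiable to `x` at `t₀` (within `J`) with respect to the topology `T`. -/
def DiffTo {E : Type*} [AddCommGroup E] [Module ℝ E] (T : TopologicalSpace E)
    (J : Set ℝ) (c : ℝ → E) (t₀ : ℝ) (x : E) : Prop :=
  ∀ V ∈ @nhds E T x, ∃ δ : ℝ, 0 < δ ∧ ∀ t : ℝ, t₀ + t ∈ J → 0 < |t| → |t| < δ →
    t⁻¹ • (c (t₀ + t) - c t₀) ∈ V

/-! For `r ≠ t₀` the difference quotient `slope c t₀ r` is the Riemann integral over `s` of the
difference quotients `slope (Γ s) t₀ r`. By the mean value theorem in convex form (the real one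
composed with Hahn–Banach separation), each of these lies in every closed convex set containing
the values `g s τ` for `τ` between `t₀` and `r`; by uniform continuity of `g` on the square these
lie in `g s t₀ + W` for a given closed convex neighbourhood `W` of `0` once `|r - t₀|` is small.
Riemann integrals of functions with values in a closed convex set stay in it, so
`slope c t₀ r ∈ ∫ g(s, t₀) ds + W`.

The integral of the continuous function `s ↦ g s t₀` exists because Riemann sums of two fine
tagged partitions differ by a convex combination of small differences `γ p - γ q`, so Riemann
sums over the uniform partitions form a Cauchy sequence. -/

section RiemannSum

variable {E : Type*} [AddCommGroup E] [Module ℝ E]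

def riemannSum (γ : ℝ → E) (k : ℕ) (t s : ℕ → ℝ) : E :=
  ∑ i ∈ Finset.range k, (t (i + 1) - t i) • γ (s i)

structure IsPartition (a b : ℝ) (k : ℕ) (t : ℕ → ℝ) : Prop where
  first : t 0 = a
  last : t k = b
  mono : ∀ i < k, t i ≤ t (i + 1)

structure IsTaggedPartition (a b δ : ℝ) (k : ℕ) (t s : ℕ → ℝ) : Prop
    extends IsPartition a b k t where
  mesh : ∀ i < k, t (i + 1) - t i < δ
  tag : ∀ i < k, t i ≤ s i ∧ s i ≤ t (i + 1)

theorem riemannIntegrableTo_iff [T : TopologicalSpace E] {a b : ℝ} {γ : ℝ → E} {x : E} :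
    RiemannIntegrableTo T a b γ x ↔ ∀ V ∈ 𝓝 x, ∃ δ > 0, ∀ k t s,
      IsTaggedPartition a b δ k t s → riemannSum γ k t s ∈ V :=
  forall₂_congr fun _ _ => exists_congr fun _ => and_congr_right fun _ =>
    forall₃_congr fun _ _ _ =>
      ⟨fun h p => h p.first p.last p.mono p.mesh p.tag,
        fun h h₁ h₂ h₃ h₄ h₅ => h ⟨⟨h₁, h₂, h₃⟩, h₄, h₅⟩⟩

namespace IsPartition

variable {a b : ℝ} {k : ℕ} {t : ℕ → ℝ}

theorem monotoneOn (h : IsPartition a b k t) : MonotoneOn t (Iic k) :=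
  monotoneOn_of_le_succ ordConnected_Iic fun i _ _ hi => h.mono i (Nat.succ_le_iff.mp hi)

theorem mem_Icc (h : IsPartition a b k t) {i : ℕ} (hi : i ≤ k) : t i ∈ Icc a b :=
  ⟨h.first ▸ h.monotoneOn (Nat.zero_le k) hi (Nat.zero_le i),
    h.last ▸ h.monotoneOn hi (le_refl k) hi⟩

theorem sum_sub (h : IsPartition a b k t) : ∑ i ∈ Finset.range k, (t (i + 1) - t i) = b - a := by
  rw [Finset.sum_range_sub, h.first, h.last]

/-- `max 0 (min q (t (i+1)) - max p (t i))` is the length of `[p, q] ∩ [t i, t (i+1)]`. -/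
theorem sum_overlap (h : IsPartition a b k t) {p q : ℝ} (hap : a ≤ p) (hpq : p ≤ q) (hqb : q ≤ b) :
    ∑ i ∈ Finset.range k, max 0 (min q (t (i + 1)) - max p (t i)) = q - p := by
  have clamp : ∀ i < k, max 0 (min q (t (i + 1)) - max p (t i)) =
      max p (min q (t (i + 1))) - max p (min q (t i)) := by
    intro i hi
    have := h.mono i hi
    simp only [min_def, max_def]
    split_ifs <;> linarith
  rw [Finset.sum_congr rfl fun i hi => clamp i (Finset.mem_range.mp hi),
    Finset.sum_range_sub (fun i => max p (min q (t i))), h.first, h.last,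
    min_eq_left hqb, max_eq_right hpq, min_eq_right (hap.trans hpq), max_eq_left hap]

end IsPartition

theorem IsTaggedPartition.tag_mem_Icc {a b δ : ℝ} {k : ℕ} {t s : ℕ → ℝ}
    (h : IsTaggedPartition a b δ k t s) {i : ℕ} (hi : i < k) : s i ∈ Icc a b :=
  ⟨(h.mem_Icc hi.le).1.trans (h.tag i hi).1, (h.tag i hi).2.trans (h.mem_Icc hi).2⟩

theorem riemannSum_mem_of_convex {γ : ℝ → E} {C : Set E} (hC : Convex ℝ C)
    (hγ : ∀ s ∈ Icc (0 : ℝ) 1, γ s ∈ C) {δ : ℝ} {k : ℕ} {t s : ℕ → ℝ}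
    (h : IsTaggedPartition 0 1 δ k t s) : riemannSum γ k t s ∈ C :=
  hC.sum_mem (fun i hi => sub_nonneg.mpr (h.mono i (Finset.mem_range.mp hi)))
    (by rw [h.sum_sub, sub_zero]) fun i hi => hγ _ (h.tag_mem_Icc (Finset.mem_range.mp hi))

/-- Weighting the pair of subintervals `(i, j)` by the length of their intersection turns the
difference into a convex combination of the differences `γ (s i) - γ (r j)`, and a nonzero weight
forces `|s i - r j| < 2 δ`. -/
theorem riemannSum_sub_riemannSum_mem {γ : ℝ → E} {W : Set E} (hW : Convex ℝ W) {δ : ℝ}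
    (hγ : ∀ p ∈ Icc (0 : ℝ) 1, ∀ q ∈ Icc (0 : ℝ) 1, |p - q| < 2 * δ → γ p - γ q ∈ W)
    {k l : ℕ} {t s u r : ℕ → ℝ}
    (hP : IsTaggedPartition 0 1 δ k t s) (hQ : IsTaggedPartition 0 1 δ l u r) :
    riemannSum γ k t s - riemannSum γ l u r ∈ W := by
  set m : ℕ × ℕ → ℝ := fun p => max 0 (min (t (p.1 + 1)) (u (p.2 + 1)) - max (t p.1) (u p.2))
  set I := Finset.range k ×ˢ Finset.range l
  have hrow : ∀ i < k, ∑ j ∈ Finset.range l, m (i, j) = t (i + 1) - t i := fun i hi =>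
    hQ.sum_overlap (hP.mem_Icc hi.le).1 (hP.mono i hi) (hP.mem_Icc hi).2
  have hcol : ∀ j < l, ∑ i ∈ Finset.range k, m (i, j) = u (j + 1) - u j := by
    intro j hj
    simp only [m, min_comm (t _), max_comm (t _)]
    exact hP.sum_overlap (hQ.mem_Icc hj.le).1 (hQ.mono j hj) (hQ.mem_Icc hj).2
  have hdiff : riemannSum γ k t s - riemannSum γ l u r =
      ∑ p ∈ I, m p • (γ (s p.1) - γ (r p.2)) := by
    have hP_sum : riemannSum γ k t s = ∑ i ∈ Finset.range k, ∑ j ∈ Finset.range l,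
        m (i, j) • γ (s i) :=
      Finset.sum_congr rfl fun i hi => by rw [← Finset.sum_smul, hrow i (Finset.mem_range.mp hi)]
    have hQ_sum : riemannSum γ l u r = ∑ i ∈ Finset.range k, ∑ j ∈ Finset.range l,
        m (i, j) • γ (r j) := by
      rw [Finset.sum_comm]
      exact Finset.sum_congr rfl fun j hj => by
        rw [← Finset.sum_smul, hcol j (Finset.mem_range.mp hj)]
    simp only [hP_sum, hQ_sum, I, Finset.sum_product, smul_sub, Finset.sum_sub_distrib]
  have hweight : ∑ p ∈ I, m p = 1 := by
    rw [Finset.sum_product, Finset.sum_congr rfl fun i hi => hrow i (Finset.mem_range.mp hi),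
      hP.sum_sub, sub_zero]
  have hclose : ∀ p ∈ I, m p ≠ 0 → γ (s p.1) - γ (r p.2) ∈ W := by
    rintro ⟨i, j⟩ hp hm
    obtain ⟨hi, hj⟩ := Finset.mem_product.mp hp
    replace hi := Finset.mem_range.mp hi
    replace hj := Finset.mem_range.mp hj
    have hpos : max (t i) (u j) < min (t (i + 1)) (u (j + 1)) := by
      by_contra! hle
      exact hm (max_eq_left (sub_nonpos.mpr hle))
    rw [max_lt_iff, lt_min_iff, lt_min_iff] at hpos
    refine hγ _ (hP.tag_mem_Icc hi) _ (hQ.tag_mem_Icc hj) (abs_lt.mpr ⟨?_, ?_⟩) <;>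
      linarith [hP.mesh i hi, hQ.mesh j hj, hP.tag i hi, hQ.tag j hj]
  rw [hdiff, ← Finset.sum_filter_of_ne (p := fun p => m p ≠ 0) fun p _ h hm => h (by simp [hm])]
  refine hW.sum_mem (fun p _ => le_max_left _ _) ?_ fun p hp => ?_
  · rwa [Finset.sum_filter_ne_zero]
  · obtain ⟨hpI, hm⟩ := Finset.mem_filter.mp hp
    exact hclose p hpI hm

end RiemannSum

noncomputable def uniformPartition (n : ℕ) (i : ℕ) : ℝ := i / (n + 1)

theorem eventually_isTaggedPartition_uniformPartition {δ : ℝ} (hδ : 0 < δ) :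
    ∀ᶠ n in atTop,
      IsTaggedPartition 0 1 δ (n + 1) (uniformPartition n) (uniformPartition n) := by
  have hstep : ∀ n i : ℕ, uniformPartition n (i + 1) - uniformPartition n i = 1 / (n + 1) := by
    intro n i
    simp only [uniformPartition]
    push_cast
    ring
  filter_upwards [tendsto_one_div_add_atTop_nhds_zero_nat.eventually (gt_mem_nhds hδ)] with n hn
  have hmono : ∀ i, uniformPartition n i ≤ uniformPartition n (i + 1) := fun i => by
    linarith [hstep n i, Nat.one_div_pos_of_nat (α := ℝ) (n := n)]
  exact ⟨⟨by simp [uniformPartition], by simp [uniformPartition, Nat.cast_add_one_ne_zero],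
    fun i _ => hmono i⟩, fun i _ => hstep n i ▸ hn, fun i _ => ⟨le_rfl, hmono i⟩⟩

section TopologicalAddGroup

variable {E : Type*} [AddCommGroup E] [TopologicalSpace E] [IsTopologicalAddGroup E]

theorem IsCompact.exists_forall_dist_lt_sub_mem {X : Type*} [PseudoMetricSpace X] {K : Set X}
    (hK : IsCompact K) {f : X → E} (hf : ContinuousOn f K) {W : Set E} (hW : W ∈ 𝓝 0) :
    ∃ δ > 0, ∀ p ∈ K, ∀ q ∈ K, dist p q < δ → f p - f q ∈ W := by
  let _ := IsTopologicalAddGroup.rightUniformSpace E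
  have hU : {z : E × E | z.2 + -z.1 ∈ W} ∈ uniformity E := by
    rw [uniformity_eq_comap_nhds_zero' E]
    exact preimage_mem_comap hW
  obtain ⟨δ, hδ, H⟩ := Metric.mem_uniformity_dist.mp
    (mem_inf_principal.mp (hK.uniformContinuousOn_of_continuous hf hU))
  exact ⟨δ, hδ, fun p hp q hq hpq => by
    simpa [← sub_eq_add_neg] using H (dist_comm p q ▸ hpq) (mk_mem_prod hq hp)⟩

end TopologicalAddGroup

theorem exists_isClosed_convex_nhds_zero_add_subset {E : Type*} [AddCommGroup E] [Module ℝ E]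
    [TopologicalSpace E] [IsTopologicalAddGroup E] [ContinuousConstSMul ℝ E]
    [LocallyConvexSpace ℝ E] {x : E} {V : Set E} (hV : V ∈ 𝓝 x) :
    ∃ W ∈ 𝓝 (0 : E), IsClosed W ∧ Convex ℝ W ∧ ∀ w ∈ W, x + w ∈ V := by
  have hV₀ : (x + ·) ⁻¹' V ∈ 𝓝 (0 : E) :=
    (continuous_const_add x).continuousAt.preimage_mem_nhds (by rwa [add_zero])
  obtain ⟨U, hU, hUcl, hUV⟩ := exists_mem_nhds_isClosed_subset hV₀
  obtain ⟨W, ⟨hW, hWc⟩, hWU⟩ := (LocallyConvexSpace.convex_basis_zero ℝ E).mem_iff.mp hU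
  exact ⟨closure W, mem_of_superset hW subset_closure, isClosed_closure, hWc.closure,
    fun w hw => hUV (closure_minimal hWU hUcl hw)⟩

namespace RiemannIntegrableTo

variable {E : Type*} [AddCommGroup E] [Module ℝ E] [T : TopologicalSpace E]
  {a b : ℝ} {γ γ' : ℝ → E} {x x' : E}

theorem sub [IsTopologicalAddGroup E] (h : RiemannIntegrableTo T a b γ x)
    (h' : RiemannIntegrableTo T a b γ' x') :
    RiemannIntegrableTo T a b (fun s => γ s - γ' s) (x - x') := by
  rw [riemannIntegrableTo_iff] at *
  intro V hV
  obtain ⟨U, hU, U', hU', hUV⟩ :=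
    mem_nhds_prod_iff.mp (continuous_sub.continuousAt.preimage_mem_nhds hV)
  obtain ⟨δ, hδ, H⟩ := h U hU
  obtain ⟨δ', hδ', H'⟩ := h' U' hU'
  refine ⟨min δ δ', lt_min hδ hδ', fun k t s hP => ?_⟩
  have hsub : riemannSum (fun s => γ s - γ' s) k t s =
      riemannSum γ k t s - riemannSum γ' k t s := by
    simp only [riemannSum, smul_sub, Finset.sum_sub_distrib]
  rw [hsub]
  exact hUV (mk_mem_prod
    (H k t s { hP with mesh := fun i hi => (hP.mesh i hi).trans_le (min_le_left _ _) })
    (H' k t s { hP with mesh := fun i hi => (hP.mesh i hi).trans_le (min_le_right _ _) }))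

theorem const_smul [ContinuousConstSMul ℝ E] (h : RiemannIntegrableTo T a b γ x) (c : ℝ) :
    RiemannIntegrableTo T a b (fun s => c • γ s) (c • x) := by
  rw [riemannIntegrableTo_iff] at *
  intro V hV
  obtain ⟨δ, hδ, H⟩ := h _ ((continuous_const_smul c).continuousAt.preimage_mem_nhds hV)
  refine ⟨δ, hδ, fun k t s hP => ?_⟩
  have hsmul : riemannSum (fun s => c • γ s) k t s = c • riemannSum γ k t s := by
    simp only [riemannSum, Finset.smul_sum, smul_comm c]
  rw [hsmul]
  exact H k t s hP

theorem tendsto_riemannSum_uniformPartition (h : RiemannIntegrableTo T 0 1 γ x) :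
    Tendsto (fun n => riemannSum γ (n + 1) (uniformPartition n) (uniformPartition n))
      atTop (𝓝 x) := by
  intro V hV
  obtain ⟨δ, hδ, H⟩ := riemannIntegrableTo_iff.mp h V hV
  exact (eventually_isTaggedPartition_uniformPartition hδ).mono fun n hn => H _ _ _ hn

theorem mem_of_isClosed_of_convex (h : RiemannIntegrableTo T 0 1 γ x) {C : Set E}
    (hC : IsClosed C) (hCc : Convex ℝ C) (hγ : ∀ s ∈ Icc (0 : ℝ) 1, γ s ∈ C) : x ∈ C :=
  hC.mem_of_tendsto h.tendsto_riemannSum_uniformPartition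
    ((eventually_isTaggedPartition_uniformPartition one_pos).mono fun _ hn =>
      riemannSum_mem_of_convex hCc hγ hn)

end RiemannIntegrableTo

section Existence

variable {E : Type*} [AddCommGroup E] [Module ℝ E] [T : TopologicalSpace E]
  [IsTopologicalAddGroup E] {γ : ℝ → E}

theorem ContinuousOn.exists_forall_riemannSum_sub_mem (hγ : ContinuousOn γ (Icc 0 1))
    {W : Set E} (hW : W ∈ 𝓝 0) (hWc : Convex ℝ W) :
    ∃ δ > 0, ∀ k t s l u r, IsTaggedPartition 0 1 δ k t s → IsTaggedPartition 0 1 δ l u r →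
      riemannSum γ k t s - riemannSum γ l u r ∈ W := by
  obtain ⟨ε, hε, H⟩ := isCompact_Icc.exists_forall_dist_lt_sub_mem hγ hW
  refine ⟨ε / 2, half_pos hε, fun k t s l u r hP hQ =>
    riemannSum_sub_riemannSum_mem hWc (fun p hp q hq hpq => H p hp q hq ?_) hP hQ⟩
  rw [Real.dist_eq]
  linarith

theorem exists_riemannIntegrableTo_of_continuousOn [ContinuousConstSMul ℝ E]
    [LocallyConvexSpace ℝ E] (hsc : SeqComplete T) (hγ : ContinuousOn γ (Icc 0 1)) :
    ∃ x, RiemannIntegrableTo T 0 1 γ x := by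
  set S : ℕ → E := fun n => riemannSum γ (n + 1) (uniformPartition n) (uniformPartition n)
  have hcauchy : ∀ V ∈ 𝓝 0, ∃ N, ∀ m ≥ N, ∀ n ≥ N, S m - S n ∈ V := by
    intro V hV
    obtain ⟨W, ⟨hW, hWc⟩, hWV⟩ := (LocallyConvexSpace.convex_basis_zero ℝ E).mem_iff.mp hV
    obtain ⟨δ, hδ, H⟩ := hγ.exists_forall_riemannSum_sub_mem hW hWc
    obtain ⟨N, hN⟩ := eventually_atTop.mp (eventually_isTaggedPartition_uniformPartition hδ)
    exact ⟨N, fun m hm n hn => hWV (H _ _ _ _ _ _ (hN m hm) (hN n hn))⟩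
  obtain ⟨x, hx⟩ := hsc S hcauchy
  refine ⟨x, riemannIntegrableTo_iff.mpr fun V hV => ?_⟩
  obtain ⟨W, hW, hWcl, hWc, hWV⟩ := exists_isClosed_convex_nhds_zero_add_subset hV
  obtain ⟨δ, hδ, H⟩ := hγ.exists_forall_riemannSum_sub_mem hW hWc
  refine ⟨δ, hδ, fun k t s hP => ?_⟩
  have hmem : riemannSum γ k t s - x ∈ W :=
    hWcl.mem_of_tendsto (tendsto_const_nhds.sub hx)
      ((eventually_isTaggedPartition_uniformPartition hδ).mono fun _ hn => H _ _ _ _ _ _ hP hn)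
  simpa using hWV _ hmem

end Existence

section Curves

variable {E : Type*} [AddCommGroup E] [Module ℝ E] [T : TopologicalSpace E]
  {J : Set ℝ} {c : ℝ → E} {t₀ : ℝ} {x : E}

theorem diffTo_iff_tendsto_slope :
    DiffTo T J c t₀ x ↔ Tendsto (slope c t₀) (𝓝[J \ {t₀}] t₀) (𝓝 x) := by
  simp only [tendsto_def, Metric.mem_nhdsWithin_iff]
  refine forall₂_congr fun V _ => exists_congr fun δ => and_congr_right fun _ =>
    ⟨fun h r ⟨hr, hrJ, hrt₀⟩ => ?_, fun h t htJ ht ht' => ?_⟩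
  · have hne : r - t₀ ≠ 0 := sub_ne_zero.mpr hrt₀
    have := h (r - t₀) (by rwa [add_sub_cancel]) (abs_pos.mpr hne) (by rwa [← Real.dist_eq])
    rwa [add_sub_cancel, ← slope_def_module] at this
  · have := @h (t₀ + t) ⟨by rwa [Metric.mem_ball, Real.dist_eq, add_sub_cancel_left],
      htJ, by simpa using abs_pos.mp ht⟩
    rwa [mem_preimage, slope_def_module, add_sub_cancel_left] at this

namespace DiffTo

theorem continuousWithinAt [ContinuousAdd E] [ContinuousSMul ℝ E]
    (h : DiffTo T J c t₀ x) : ContinuousWithinAt c J t₀ := by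
  rw [← continuousWithinAt_sdiff_self]
  have hlim : Tendsto (fun r => (r - t₀) • slope c t₀ r + c t₀) (𝓝[J \ {t₀}] t₀)
      (𝓝 ((t₀ - t₀) • x + c t₀)) :=
    ((tendsto_nhdsWithin_of_tendsto_nhds ((continuous_sub_right t₀).tendsto t₀)).smul
      (diffTo_iff_tendsto_slope.mp h)).add_const _
  have hc : (fun r => (r - t₀) • slope c t₀ r + c t₀) = c := funext (sub_smul_slope_vadd c t₀)
  rwa [sub_self, zero_smul, zero_add, hc] at hlim

theorem hasDerivWithinAt_comp [ContinuousAdd E] [ContinuousConstSMul ℝ E]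
    (h : DiffTo T J c t₀ x) (f : E →L[ℝ] ℝ) : HasDerivWithinAt (f ∘ c) (f x) J t₀ := by
  rw [hasDerivWithinAt_iff_tendsto_slope]
  have hslope : slope (f ∘ c) t₀ = f ∘ slope c t₀ :=
    funext fun r => f.toLinearMap.slope_comp c t₀ r
  rw [hslope]
  exact (f.continuous.tendsto x).comp (diffTo_iff_tendsto_slope.mp h)

end DiffTo

end Curves

section MeanValue

variable {E : Type*} [AddCommGroup E] [Module ℝ E] [T : TopologicalSpace E]
  [IsTopologicalAddGroup E] [ContinuousSMul ℝ E] [LocallyConvexSpace ℝ E]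

/-- Apply the real mean value theorem to `f ∘ φ` for a continuous functional `f` separating the
slope from `C`. -/
theorem slope_mem_of_forall_diffTo {J : Set ℝ} {φ d : ℝ → E} {α β : ℝ} (hαβ : α ≠ β)
    (hJ : uIcc α β ⊆ J) {C : Set E} (hCc : Convex ℝ C) (hC : IsClosed C)
    (hd : ∀ τ ∈ uIcc α β, DiffTo T J φ τ (d τ)) (hdC : ∀ τ ∈ uIcc α β, d τ ∈ C) :
    slope φ α β ∈ C := by
  wlog hlt : α < β generalizing α β
  · rw [slope_comm]
    rw [uIcc_comm] at hJ hd hdC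
    exact this hαβ.symm hJ hd hdC (hαβ.lt_or_gt.resolve_left hlt)
  rw [uIcc_of_le hlt.le] at hJ hd hdC
  by_contra hslope
  obtain ⟨f, u, hfC, hfslope⟩ := geometric_hahn_banach_closed_point hCc hC hslope
  have hderiv : ∀ τ ∈ Icc α β, HasDerivWithinAt (f ∘ φ) (f (d τ)) (Icc α β) τ :=
    fun τ hτ => ((hd τ hτ).hasDerivWithinAt_comp f).mono hJ
  obtain ⟨ξ, hξ, hfξ⟩ := exists_hasDerivAt_eq_slope (f ∘ φ) (fun τ => f (d τ)) hlt
    (fun τ hτ => (hderiv τ hτ).continuousWithinAt)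
    (fun τ hτ => (hderiv τ (Ioo_subset_Icc_self hτ)).hasDerivAt (Icc_mem_nhds hτ.1 hτ.2))
  have hf_slope : f (slope φ α β) = f (d ξ) := by
    rw [hfξ, ← slope_def_field]
    exact (f.toLinearMap.slope_comp φ α β).symm
  exact (hfC _ (hdC ξ (Ioo_subset_Icc_self hξ))).not_gt (hf_slope ▸ hfslope)

end MeanValue

section DiffUnderIntegral

variable {E : Type*} [AddCommGroup E] [Module ℝ E] [T : TopologicalSpace E]
  [IsTopologicalAddGroup E] [ContinuousSMul ℝ E] [LocallyConvexSpace ℝ E]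

theorem diffTo_parametricRiemannIntegral {Γ g : ℝ → ℝ → E} {c : ℝ → E}
    (hdiff : ∀ s ∈ Icc (0 : ℝ) 1, ∀ t ∈ Icc (0 : ℝ) 1, DiffTo T (Icc 0 1) (Γ s) t (g s t))
    (hg : ContinuousOn (fun p : ℝ × ℝ => g p.1 p.2) (Icc 0 1 ×ˢ Icc 0 1))
    (hc : ∀ t ∈ Icc (0 : ℝ) 1, RiemannIntegrableTo T 0 1 (fun s => Γ s t) (c t))
    {t₀ : ℝ} (ht₀ : t₀ ∈ Icc (0 : ℝ) 1) {y : E}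
    (hy : RiemannIntegrableTo T 0 1 (fun s => g s t₀) y) :
    DiffTo T (Icc 0 1) c t₀ y := by
  refine diffTo_iff_tendsto_slope.mpr fun V hV => mem_map.mpr ?_
  obtain ⟨W, hW, hWcl, hWc, hWV⟩ := exists_isClosed_convex_nhds_zero_add_subset hV
  obtain ⟨δ, hδ, hgδ⟩ := (isCompact_Icc.prod isCompact_Icc).exists_forall_dist_lt_sub_mem hg hW
  filter_upwards [inter_mem_nhdsWithin (Icc 0 1 \ {t₀}) (Metric.ball_mem_nhds t₀ hδ),
    self_mem_nhdsWithin] with r hrδ ⟨hr, hrt₀⟩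
  have hslope : RiemannIntegrableTo T 0 1 (fun s => slope (Γ s) t₀ r) (slope c t₀ r) := by
    simpa only [slope_def_module] using ((hc r hr).sub (hc t₀ ht₀)).const_smul (r - t₀)⁻¹
  refine mem_preimage.mpr (add_sub_cancel y (slope c t₀ r) ▸ hWV _ ?_)
  refine (hslope.sub hy).mem_of_isClosed_of_convex hWcl hWc fun s hs => ?_
  have hJ : uIcc t₀ r ⊆ Icc 0 1 := uIcc_subset_Icc ht₀ hr
  have hmem := slope_mem_of_forall_diffTo (Ne.symm hrt₀) hJ (hWc.translate_preimage_left (-g s t₀))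
    (hWcl.preimage (continuous_add_const _)) (fun τ hτ => hdiff s hs τ (hJ hτ)) fun τ hτ => ?_
  · simpa only [mem_preimage, ← sub_eq_add_neg] using hmem
  · rw [mem_preimage, ← sub_eq_add_neg]
    refine hgδ (s, τ) ⟨hs, hJ hτ⟩ (s, t₀) ⟨hs, ht₀⟩ ?_
    rw [Prod.dist_eq, dist_self, Real.dist_eq]
    exact max_lt hδ ((abs_sub_left_of_mem_uIcc hτ).trans_lt (Real.dist_eq r t₀ ▸ hrδ.2))

end DiffUnderIntegral

theorem diff_under_integral_general {E : Type*} [AddCommGroup E] [Module ℝ E]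
    [T : TopologicalSpace E] [IsTopologicalAddGroup E] [ContinuousSMul ℝ E]
    [LocallyConvexSpace ℝ E] (hsc : SeqComplete T)
    (Γ : ℝ → ℝ → E)
    (g : ℝ → ℝ → E)
    (hdiff : ∀ s ∈ Set.Icc (0 : ℝ) 1, ∀ t ∈ Set.Icc (0 : ℝ) 1,
      DiffTo T (Set.Icc 0 1) (Γ s) t (g s t) ∧
        ∀ y : E, DiffTo T (Set.Icc 0 1) (Γ s) t y → y = g s t)
    (hg : ContinuousOn (fun p : ℝ × ℝ => g p.1 p.2) (Set.Icc 0 1 ×ˢ Set.Icc 0 1))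
    (c : ℝ → E)
    (hc : ∀ t ∈ Set.Icc (0 : ℝ) 1, RiemannIntegrableTo T 0 1 (fun s => Γ s t) (c t)) :
    (∀ t ∈ Set.Icc (0 : ℝ) 1, ∃ y : E,
      RiemannIntegrableTo T 0 1 (fun s => g s t) y ∧ DiffTo T (Set.Icc 0 1) c t y) ∧
    ContinuousWithinAt c (Set.Icc 0 1) 0 ∧ ContinuousWithinAt c (Set.Icc 0 1) 1 := by
  have hderiv : ∀ t ∈ Icc (0 : ℝ) 1, ∃ y : E,
      RiemannIntegrableTo T 0 1 (fun s => g s t) y ∧ DiffTo T (Icc 0 1) c t y := by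
    intro t ht
    obtain ⟨y, hy⟩ := exists_riemannIntegrableTo_of_continuousOn hsc
      (hg.comp (continuous_id.prodMk continuous_const).continuousOn fun s hs => ⟨hs, ht⟩)
    exact ⟨y, hy,
      diffTo_parametricRiemannIntegral (fun s hs t ht => (hdiff s hs t ht).1) hg hc ht hy⟩
  obtain ⟨_, -, hderiv₀⟩ := hderiv 0 (left_mem_Icc.mpr zero_le_one)
  obtain ⟨_, -, hderiv₁⟩ := hderiv 1 (right_mem_Icc.mpr zero_le_one)
  exact ⟨hderiv, hderiv₀.continuousWithinAt, hderiv₁.continuousWithinAt⟩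

/-- Differentiation under the integral sign: Let `E` be a sequentially
complete Hausdorff real locally convex topological vector space, and `Γ : [0,1] → E^[0,1]`
continuous into the product (pointwise convergence) topology, such that each curve `Γ s` is
differentiable at every `t ∈ [0,1]` to a unique element `g s t`, with `g` continuous on
`[0,1] × [0,1]`.  If `c t` is the Riemann integral over `s ∈ [0,1]` of `Γ s t`, then for
every `t ∈ [0,1]` the curve `c` is differentiable at `t` to the Riemann integral over
`s ∈ [0,1]` of `g s t` (which exists); in particular `c` is a standard differentiable curve,
being in addition continuous at `0` and `1`. -/
theorem diff_under_integral {E : Type*} [AddCommGroup E] [Module ℝ E]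
    [T : TopologicalSpace E] [IsTopologicalAddGroup E] [ContinuousSMul ℝ E]
    [LocallyConvexSpace ℝ E] [T2Space E] (hsc : SeqComplete T)
    (Γ : ℝ → ℝ → E)
    (hΓcont : ContinuousOn (fun s => fun t : Set.Icc (0 : ℝ) 1 => Γ s t) (Set.Icc 0 1))
    (g : ℝ → ℝ → E)
    (hdiff : ∀ s ∈ Set.Icc (0 : ℝ) 1, ∀ t ∈ Set.Icc (0 : ℝ) 1,
      DiffTo T (Set.Icc 0 1) (Γ s) t (g s t) ∧
        ∀ y : E, DiffTo T (Set.Icc 0 1) (Γ s) t y → y = g s t)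
    (hg : ContinuousOn (fun p : ℝ × ℝ => g p.1 p.2) (Set.Icc 0 1 ×ˢ Set.Icc 0 1))
    (c : ℝ → E)
    (hc : ∀ t ∈ Set.Icc (0 : ℝ) 1, RiemannIntegrableTo T 0 1 (fun s => Γ s t) (c t)) :
    (∀ t ∈ Set.Icc (0 : ℝ) 1, ∃ y : E,
      RiemannIntegrableTo T 0 1 (fun s => g s t) y ∧ DiffTo T (Set.Icc 0 1) c t y) ∧
    ContinuousWithinAt c (Set.Icc 0 1) 0 ∧ ContinuousWithinAt c (Set.Icc 0 1) 1 :=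
  diff_under_integral_general (T := T) hsc Γ g hdiff hg c hc
end

section
/- Let Ω ⊆ ℝ with [0,1] ⊆ Ω, let A = Ω \ (0,1), and let T be the topology on Ω consisting of all unions of members of the basis B = {(s,t) : 0 < s < t < 1} ∪ {(s,1) ∪ {t} : 0 < s < 1 and t ∈ A}. Then T is a first countable, locally compact topology on Ω which is neither Hausdorff nor regular; and if the set A is infinite, then for every t ∈ A the singleton {t} belongs to the k-extension k_ex T but not to the Kelleyfication k_elt T, so that k_elt T ≠ k_ex T. -/
open Set Filter Topology

/-!
For an end `a` (a point of `Ω` outside `(0,1)`), the map `(0,1] → Ω` that is the identity on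
`(0,1)` and sends `1` to `a` is continuous and open, and these maps cover `Ω`; so `Ω` inherits
first countability and local compactness from `(0,1]`. Any two ends have intersecting tails
`(s,1) ∪ {a}`, so the ends `0` and `1` cannot be separated; in a regular space they would then
be inseparable, which the open set `(1/2,1) ∪ {0}` rules out.

A compact set contains only finitely many ends, because the sets `(0,1) ∪ {x}` cover it and each
contains only one end. So if there are infinitely many ends, a closed compact set `K` misses some
end `b`, hence misses a whole tail `(s,1)`, and every end `a` is isolated in `K`: `{a}` is open in
the k-extension. On the other hand `a` is an accumulation point of the compact set
`[1/2,1) ∪ {a}`, so `{a}` is not open in the Kelleyfication.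
-/

open TopologicalSpace

theorem TopologicalSpace.isTopologicalBasis_of_isOpen_iff_sUnion {X : Type*}
    [TopologicalSpace X] {B : Set (Set X)} (h : ∀ U, IsOpen U ↔ ∃ 𝒜 ⊆ B, U = ⋃₀ 𝒜) :
    IsTopologicalBasis B := by
  refine isTopologicalBasis_of_isOpen_of_nhds
    (fun u hu => (h u).2 ⟨{u}, singleton_subset_iff.2 hu, sUnion_singleton u |>.symm⟩) ?_
  intro a u hau hu
  obtain ⟨𝒜, h𝒜B, rfl⟩ := (h u).1 hu
  obtain ⟨v, hv𝒜, hav⟩ := hau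
  exact ⟨v, h𝒜B hv𝒜, hav, subset_sUnion_of_mem hv𝒜⟩

section OpenMapCover

variable {ι Y X : Type*} [TopologicalSpace Y] [TopologicalSpace X] {f : ι → Y → X}

theorem FirstCountableTopology.of_isOpenMap_cover [FirstCountableTopology Y]
    (hc : ∀ i, Continuous (f i)) (ho : ∀ i, IsOpenMap (f i)) (hf : ∀ x, ∃ i y, f i y = x) :
    FirstCountableTopology X where
  nhds_generated_countable x := by
    obtain ⟨i, y, rfl⟩ := hf x
    rw [← (ho i).map_nhds_eq (hc i).continuousAt]
    infer_instance

theorem LocallyCompactSpace.of_isOpenMap_cover [LocallyCompactSpace Y]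
    (hc : ∀ i, Continuous (f i)) (ho : ∀ i, IsOpenMap (f i)) (hf : ∀ x, ∃ i y, f i y = x) :
    LocallyCompactSpace X where
  local_compact_nhds x n hn := by
    obtain ⟨i, y, rfl⟩ := hf x
    obtain ⟨K, hK, hKn, hKc⟩ := _root_.local_compact_nhds ((hc i).continuousAt hn)
    exact ⟨f i '' K, (ho i).image_mem_nhds hK, image_subset_iff.2 hKn, hKc.image (hc i)⟩

end OpenMapCover

theorem locCompact_of_locallyCompactSpace {X : Type*} [t : TopologicalSpace X]
    [LocallyCompactSpace X] : LocCompact t := by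
  intro y V hV hyV
  obtain ⟨K, hK, hKV, hKc⟩ := local_compact_nhds (IsOpen.mem_nhds hV hyV)
  exact ⟨K, interior K, mem_interior_iff_mem_nhds.2 hK, isOpen_interior, interior_subset, hKV, hKc⟩

section Kelleyfication

variable {X : Type*} [t : TopologicalSpace X]

theorem Kelley.not_isOpen_singleton_of_mem_closure {a : X} {K : Set X} (hK : IsCompact K)
    (haK : a ∈ K) (hacc : a ∈ closure (K \ {a})) : ¬ (Kelley t).IsOpen {a} := by
  intro h
  obtain ⟨V, hV, hVK⟩ := h K hK
  have haV : a ∈ V := (hVK.le ⟨rfl, haK⟩).1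
  obtain ⟨z, hzV, hzK, hza⟩ := mem_closure_iff.1 hacc V hV haV
  exact hza (hVK.ge ⟨hzV, hzK⟩).1

theorem KelleyEx.isOpen_singleton_of_notMem_closure {a : X}
    (h : ∀ K, IsCompact K → IsClosed K → a ∉ closure (K \ {a})) : (KelleyEx t).IsOpen {a} := by
  intro K hK hKc
  refine ⟨(closure (K \ {a}))ᶜ, isClosed_closure.isOpen_compl, ?_⟩
  ext z
  constructor
  · rintro ⟨rfl, hzK⟩
    exact ⟨h K hK hKc, hzK⟩
  · rintro ⟨hz, hzK⟩
    by_contra hza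
    exact hz (subset_closure ⟨hzK, fun hza' => hza ⟨hza', hzK⟩⟩)

end Kelleyfication

namespace ManyEndedInterval

def basis (Ω : Set ℝ) : Set (Set Ω) :=
  {S | ∃ s t : ℝ, 0 < s ∧ s < t ∧ t < 1 ∧
    S = {x : ↥Ω | s < (x : ℝ) ∧ (x : ℝ) < t}} ∪
  {S | ∃ (s : ℝ) (a : ↥Ω), 0 < s ∧ s < 1 ∧ (a : ℝ) ∈ Ω \ Set.Ioo 0 1 ∧
    S = {x : ↥Ω | s < (x : ℝ) ∧ (x : ℝ) < 1} ∪ {a}}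

def tail {Ω : Set ℝ} (s : ℝ) (a : Ω) : Set Ω := (↑) ⁻¹' Ioo s 1 ∪ {a}

section Chart

variable {Ω : Set ℝ} (hΩ : Icc 0 1 ⊆ Ω)

noncomputable def chart (a : Ω) (x : Ioc (0 : ℝ) 1) : Ω :=
  if h : (x : ℝ) < 1 then ⟨x, hΩ ⟨x.2.1.le, h.le⟩⟩ else a

theorem chart_of_lt {a : Ω} {x : Ioc (0 : ℝ) 1} (h : (x : ℝ) < 1) :
    (chart hΩ a x : ℝ) = x := by
  simp [chart, h]

theorem chart_of_not_lt {a : Ω} {x : Ioc (0 : ℝ) 1} (h : ¬ (x : ℝ) < 1) : chart hΩ a x = a := by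
  simp [chart, h]

theorem chart_mk {a z : Ω} (hz : (z : ℝ) ∈ Ioo 0 1) :
    chart hΩ a ⟨z, Ioo_subset_Ioc_self hz⟩ = z :=
  Subtype.ext (chart_of_lt hΩ hz.2)

theorem exists_chart_eq (y : Ω) :
    ∃ (a : {a : Ω // (a : ℝ) ∉ Ioo 0 1}) (x : Ioc (0 : ℝ) 1), chart hΩ a x = y := by
  by_cases hy : (y : ℝ) ∈ Ioo 0 1
  · exact ⟨⟨⟨1, hΩ ⟨zero_le_one, le_rfl⟩⟩, fun h => h.2.false⟩, _, chart_mk hΩ hy⟩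
  · exact ⟨⟨y, hy⟩, ⟨1, one_pos, le_rfl⟩, chart_of_not_lt hΩ (lt_irrefl 1)⟩

end Chart

variable {Ω : Set ℝ} [TopologicalSpace Ω] (hB : IsTopologicalBasis (basis Ω))
include hB

theorem isOpen_preimage_Ioo {s t : ℝ} (hs : 0 ≤ s) (ht : t ≤ 1) :
    IsOpen ((↑) ⁻¹' Ioo s t : Set Ω) := by
  refine hB.isOpen_iff.2 fun x ⟨hsx, hxt⟩ => ?_
  refine ⟨(↑) ⁻¹' Ioo (max s (x / 2)) (min t ((x + 1) / 2)),
    Or.inl ⟨_, _, lt_max_of_lt_right (by linarith), ?_, min_lt_of_right_lt (by linarith), rfl⟩,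
    ⟨max_lt hsx (by linarith), lt_min hxt (by linarith)⟩,
    fun y hy => ⟨(le_max_left _ _).trans_lt hy.1, hy.2.trans_le (min_le_left _ _)⟩⟩
  exact (max_lt hsx (by linarith)).trans (lt_min hxt (by linarith))

theorem isOpen_tail {s : ℝ} {a : Ω} (hs : 0 < s) (hs1 : s < 1) (ha : (a : ℝ) ∉ Ioo 0 1) :
    IsOpen (tail s a) :=
  hB.isOpen (Or.inr ⟨s, a, hs, hs1, ⟨a.2, ha⟩, rfl⟩)

theorem nhds_eq_comap_of_mem_Ioo {y : Ω} (hy : (y : ℝ) ∈ Ioo 0 1) :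
    𝓝 y = comap (↑) (𝓝 (y : ℝ)) := by
  apply le_antisymm
  · intro S hS
    obtain ⟨V, hV, hVS⟩ := mem_comap.1 hS
    obtain ⟨l, u, hy', hlu⟩ :=
      mem_nhds_iff_exists_Ioo_subset.1 (inter_mem hV (Ioo_mem_nhds hy.1 hy.2))
    obtain ⟨hl, hu⟩ := (Ioo_subset_Ioo_iff (hy'.1.trans hy'.2)).1 (hlu.trans inter_subset_right)
    exact mem_of_superset ((isOpen_preimage_Ioo hB hl hu).mem_nhds hy')
      fun z hz => hVS (hlu hz).1
  · refine hB.nhds_hasBasis.ge_iff.2 fun b ⟨hbB, hyb⟩ => ?_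
    rcases hbB with ⟨s, t, -, -, -, rfl⟩ | ⟨s, a, -, -, ha, rfl⟩
    · exact preimage_mem_comap (Ioo_mem_nhds hyb.1 hyb.2)
    · rcases hyb with hyb | rfl
      · exact mem_of_superset (preimage_mem_comap (Ioo_mem_nhds hyb.1 hyb.2)) subset_union_left
      · exact absurd hy ha.2

theorem hasBasis_nhds_tail {a : Ω} (ha : (a : ℝ) ∉ Ioo 0 1) :
    (𝓝 a).HasBasis (fun s : ℝ => 0 < s ∧ s < 1) (tail · a) := by
  refine hB.nhds_hasBasis.to_hasBasis (fun b ⟨hbB, hab⟩ => ?_)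
    fun s hs => ⟨tail s a, ⟨Or.inr ⟨s, a, hs.1, hs.2, ⟨a.2, ha⟩, rfl⟩, Or.inr rfl⟩, subset_rfl⟩
  rcases hbB with ⟨s, t, hs, -, ht, rfl⟩ | ⟨s, a', hs, hs1, -, rfl⟩
  · exact absurd ⟨hs.trans hab.1, hab.2.trans ht⟩ ha
  · rcases hab with hab | rfl
    · exact absurd ⟨hs.trans hab.1, hab.2⟩ ha
    · exact ⟨s, ⟨hs, hs1⟩, subset_rfl⟩

theorem insert_preimage_Ioo_mem_nhds (x : Ω) :
    insert x ((↑) ⁻¹' Ioo (0 : ℝ) 1 : Set Ω) ∈ 𝓝 x := by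
  by_cases hx : (x : ℝ) ∈ Ioo 0 1
  · exact mem_of_superset ((isOpen_preimage_Ioo hB le_rfl le_rfl).mem_nhds hx) (subset_insert _ _)
  · refine (hasBasis_nhds_tail hB hx).mem_iff.2 ⟨1 / 2, by norm_num, ?_⟩
    rintro z (hz | hz)
    · exact Or.inr ⟨by linarith [hz.1], hz.2⟩
    · exact Or.inl hz

theorem finite_ends_of_isCompact {K : Set Ω} (hK : IsCompact K) :
    {x ∈ K | (x : ℝ) ∉ Ioo 0 1}.Finite := by
  obtain ⟨t, -, hKt⟩ := hK.elim_nhds_subcover _ fun x _ => insert_preimage_Ioo_mem_nhds hB x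
  refine t.finite_toSet.subset fun x ⟨hxK, hx⟩ => ?_
  obtain ⟨y, hyt, hxy⟩ := mem_iUnion₂.1 (hKt hxK)
  rcases hxy with rfl | hxy
  · exact hyt
  · exact absurd hxy hx

theorem exists_end_notMem_of_isCompact (hinf : (Ω \ Ioo 0 1).Infinite) {K : Set Ω}
    (hK : IsCompact K) : ∃ b : Ω, (b : ℝ) ∉ Ioo 0 1 ∧ b ∉ K := by
  obtain ⟨r, ⟨hrΩ, hr⟩, hrK⟩ :=
    (hinf.sdiff ((finite_ends_of_isCompact hB hK).image (↑))).nonempty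
  exact ⟨⟨r, hrΩ⟩, hr, fun h => hrK ⟨⟨r, hrΩ⟩, ⟨h, hr⟩, rfl⟩⟩

theorem isOpen_kelleyEx_singleton (hinf : (Ω \ Ioo 0 1).Infinite) {a : Ω}
    (ha : (a : ℝ) ∉ Ioo 0 1) : (KelleyEx ‹_›).IsOpen {a} := by
  refine KelleyEx.isOpen_singleton_of_notMem_closure fun K hK hKc hacc => ?_
  obtain ⟨b, hb, hbK⟩ := exists_end_notMem_of_isCompact hB hinf hK
  obtain ⟨s, hs, hsK⟩ := (hasBasis_nhds_tail hB hb).mem_iff.1 (hKc.isOpen_compl.mem_nhds hbK)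
  obtain ⟨z, ⟨hzK, hza⟩, hz⟩ :=
    (mem_closure_iff_nhds_basis (hasBasis_nhds_tail hB ha)).1 hacc s hs
  rcases hz with hz | rfl
  · exact hsK (Or.inl hz) hzK
  · exact hza rfl

variable (hΩ : Icc 0 1 ⊆ Ω)
include hΩ

theorem not_disjoint_nhds {a b : Ω} (ha : (a : ℝ) ∉ Ioo 0 1) (hb : (b : ℝ) ∉ Ioo 0 1) :
    ¬ Disjoint (𝓝 a) (𝓝 b) := by
  rw [(hasBasis_nhds_tail hB ha).disjoint_iff (hasBasis_nhds_tail hB hb)]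
  rintro ⟨s, ⟨hs, hs1⟩, t, ⟨ht, ht1⟩, hst⟩
  have hm : (max s t + 1) / 2 ∈ Ioo (max s t) 1 := by
    constructor <;> linarith [max_lt hs1 ht1]
  let m : Ω := ⟨(max s t + 1) / 2, hΩ ⟨by linarith [le_max_left s t], hm.2.le⟩⟩
  have hma : m ∈ tail s a := Or.inl ⟨(le_max_left s t).trans_lt hm.1, hm.2⟩
  have hmb : m ∈ tail t b := Or.inl ⟨(le_max_right s t).trans_lt hm.1, hm.2⟩
  exact disjoint_left.1 hst hma hmb

theorem not_t2Space : ¬ T2Space Ω := by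
  intro _
  have h0 : (0 : ℝ) ∈ Ω := hΩ ⟨le_rfl, zero_le_one⟩
  have h1 : (1 : ℝ) ∈ Ω := hΩ ⟨zero_le_one, le_rfl⟩
  exact not_disjoint_nhds hB hΩ (a := ⟨0, h0⟩) (b := ⟨1, h1⟩) (fun h => h.1.false)
    (fun h => h.2.false) (disjoint_nhds_nhds.2 (Subtype.coe_ne_coe.1 zero_ne_one))

theorem not_regularSpace : ¬ RegularSpace Ω := by
  intro _
  have h0 : (0 : ℝ) ∈ Ω := hΩ ⟨le_rfl, zero_le_one⟩
  have h1 : (1 : ℝ) ∈ Ω := hΩ ⟨zero_le_one, le_rfl⟩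
  have hins : Inseparable (⟨0, h0⟩ : Ω) ⟨1, h1⟩ := not_not.1 fun h =>
    not_disjoint_nhds hB hΩ (fun h => h.1.false) (fun h => h.2.false)
      (disjoint_nhds_nhds_iff_not_inseparable.2 h)
  rcases (hins.mem_open_iff (isOpen_tail hB one_half_pos one_half_lt_one fun h => h.1.false)).1
    (Or.inr rfl) with h | h
  · exact h.2.false
  · exact zero_ne_one (congrArg Subtype.val h).symm

theorem continuous_chart {a : Ω} (ha : (a : ℝ) ∉ Ioo 0 1) : Continuous (chart hΩ a) := by
  refine continuous_iff_continuousAt.2 fun x => ?_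
  rcases x.2.2.lt_or_eq with hx | hx
  · have hmid : (chart hΩ a x : ℝ) ∈ Ioo 0 1 := by rw [chart_of_lt hΩ hx]; exact ⟨x.2.1, hx⟩
    rw [ContinuousAt, nhds_eq_comap_of_mem_Ioo hB hmid, tendsto_comap_iff, chart_of_lt hΩ hx]
    refine Tendsto.congr' ?_ continuous_subtype_val.continuousAt
    filter_upwards [continuous_subtype_val.continuousAt.preimage_mem_nhds (Iio_mem_nhds hx)]
      with z hz
    exact (chart_of_lt hΩ hz).symm
  · rw [ContinuousAt, chart_of_not_lt hΩ hx.not_lt, (hasBasis_nhds_tail hB ha).tendsto_right_iff]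
    rintro s ⟨-, hs1⟩
    filter_upwards [continuous_subtype_val.continuousAt.preimage_mem_nhds
      (Ioi_mem_nhds (hx.symm ▸ hs1 : s < x))] with z (hz : s < z)
    by_cases h : (z : ℝ) < 1
    · exact Or.inl (by rw [mem_preimage, chart_of_lt hΩ h]; exact ⟨hz, h⟩)
    · exact Or.inr (chart_of_not_lt hΩ h)

theorem isOpenMap_chart {a : Ω} (ha : (a : ℝ) ∉ Ioo 0 1) : IsOpenMap (chart hΩ a) := by
  refine isOpenMap_iff_nhds_le.2 fun x S hS => ?_
  obtain ⟨u, hu, huS⟩ := (mem_nhds_subtype _ _ _).1 hS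
  rcases x.2.2.lt_or_eq with hx | hx
  · have hmid : (chart hΩ a x : ℝ) ∈ Ioo 0 1 := by rw [chart_of_lt hΩ hx]; exact ⟨x.2.1, hx⟩
    rw [nhds_eq_comap_of_mem_Ioo hB hmid, chart_of_lt hΩ hx]
    refine mem_comap.2 ⟨u ∩ Ioo 0 1, inter_mem hu (Ioo_mem_nhds x.2.1 hx), fun z hz => ?_⟩
    rw [← chart_mk hΩ (a := a) hz.2]
    exact huS hz.1
  · obtain ⟨l, hl, hlu⟩ := exists_Ioc_subset_of_mem_nhds' (hx ▸ hu) one_half_lt_one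
    rw [chart_of_not_lt hΩ hx.not_lt]
    refine (hasBasis_nhds_tail hB ha).mem_iff.2 ⟨l, ⟨by linarith [hl.1], hl.2⟩, ?_⟩
    rintro z (hz | rfl)
    · rw [← chart_mk hΩ (a := a) ⟨by linarith [hl.1, hz.1], hz.2⟩]
      exact huS (hlu ⟨hz.1, hz.2.le⟩)
    · rw [← chart_of_not_lt hΩ (a := z) hx.not_lt]
      exact huS (mem_of_mem_nhds hu : (x : ℝ) ∈ u)

theorem firstCountableTopology : FirstCountableTopology Ω :=
  .of_isOpenMap_cover (fun a => continuous_chart hB hΩ a.2) (fun a => isOpenMap_chart hB hΩ a.2)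
    (exists_chart_eq hΩ)

theorem locallyCompactSpace : LocallyCompactSpace Ω :=
  haveI := (isLocallyClosed_Ioc (a := (0 : ℝ)) (b := 1)).locallyCompactSpace
  .of_isOpenMap_cover (fun a => continuous_chart hB hΩ a.2) (fun a => isOpenMap_chart hB hΩ a.2)
    (exists_chart_eq hΩ)

theorem not_isOpen_kelley_singleton {a : Ω} (ha : (a : ℝ) ∉ Ioo 0 1) :
    ¬ (Kelley ‹_›).IsOpen {a} := by
  have hsub : Icc (1 / 2 : ℝ) 1 ⊆ Ioc 0 1 := Icc_subset_Ioc one_half_pos le_rfl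
  refine Kelley.not_isOpen_singleton_of_mem_closure
    (isCompact_range ((continuous_chart hB hΩ ha).comp (continuous_inclusion hsub)))
    ⟨⟨1, by norm_num, le_rfl⟩, chart_of_not_lt hΩ (lt_irrefl 1)⟩ ?_
  refine (mem_closure_iff_nhds_basis (hasBasis_nhds_tail hB ha)).2 fun s ⟨hs, hs1⟩ => ?_
  have hm : (max s (1 / 2) + 1) / 2 ∈ Ioo (max s (1 / 2)) 1 := by
    constructor <;> linarith [max_lt hs1 one_half_lt_one]
  have hm' : (max s (1 / 2) + 1) / 2 ∈ Ioo 0 1 := ⟨by linarith [le_max_right s (1 / 2)], hm.2⟩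
  let m : Ω := ⟨_, hΩ (Ioo_subset_Icc_self hm')⟩
  have hmK : m ∈ range (chart hΩ a ∘ inclusion hsub) :=
    ⟨⟨_, by linarith [le_max_right s (1 / 2)], hm.2.le⟩, chart_mk hΩ (z := m) hm'⟩
  have hma : m ≠ a := fun h => ha (h ▸ hm')
  exact ⟨m, ⟨hmK, hma⟩, Or.inl ⟨(le_max_left s (1 / 2)).trans_lt hm.1, hm.2⟩⟩

end ManyEndedInterval

open ManyEndedInterval in
/-- With `[0,1] ⊆ Ω ⊆ ℝ`, `A = Ω \ (0,1)`, and `T` the topology on `Ω` whose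
open sets are exactly the unions of members of the basis
`B = {(s,t) : 0 < s < t < 1} ∪ {(s,1) ∪ {a} : 0 < s < 1, a ∈ A}`, the topology `T` is first
countable and locally compact but neither Hausdorff nor regular; and if `A` is infinite then
for every `a ∈ A` the singleton `{a}` is open in the k-extension of `T` but not in the
Kelleyfication of `T`, so that these two topologies differ. -/
theorem example_locally_compact_not_kSpace (Ω : Set ℝ) (hΩ : Set.Icc (0 : ℝ) 1 ⊆ Ω)
    (B : Set (Set ↥Ω))
    (hB : B =
      {S | ∃ s t : ℝ, 0 < s ∧ s < t ∧ t < 1 ∧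
        S = {x : ↥Ω | s < (x : ℝ) ∧ (x : ℝ) < t}} ∪
      {S | ∃ (s : ℝ) (a : ↥Ω), 0 < s ∧ s < 1 ∧ (a : ℝ) ∈ Ω \ Set.Ioo 0 1 ∧
        S = {x : ↥Ω | s < (x : ℝ) ∧ (x : ℝ) < 1} ∪ {a}})
    (T : TopologicalSpace ↥Ω)
    (hT : ∀ U : Set ↥Ω, T.IsOpen U ↔ ∃ 𝒜 ⊆ B, U = ⋃₀ 𝒜) :
    @FirstCountableTopology ↥Ω T ∧ LocCompact T ∧
    ¬ @T2Space ↥Ω T ∧ ¬ @RegularSpace ↥Ω T ∧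
    ((Ω \ Set.Ioo 0 1).Infinite →
      (∀ a : ↥Ω, (a : ℝ) ∈ Ω \ Set.Ioo 0 1 →
        (KelleyEx T).IsOpen {a} ∧ ¬ (Kelley T).IsOpen {a}) ∧
      Kelley T ≠ KelleyEx T) := by
  let := T
  subst hB
  have hbasis : IsTopologicalBasis (basis Ω) := isTopologicalBasis_of_isOpen_iff_sUnion hT
  have := locallyCompactSpace hbasis hΩ
  have h1 : ((⟨1, hΩ ⟨zero_le_one, le_rfl⟩⟩ : Ω) : ℝ) ∉ Ioo 0 1 := fun h => h.2.false
  refine ⟨firstCountableTopology hbasis hΩ, locCompact_of_locallyCompactSpace,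
    not_t2Space hbasis hΩ, not_regularSpace hbasis hΩ, fun hinf => ⟨fun a ha =>
      ⟨isOpen_kelleyEx_singleton hbasis hinf ha.2, not_isOpen_kelley_singleton hbasis hΩ ha.2⟩,
      fun h => not_isOpen_kelley_singleton hbasis hΩ h1 ?_⟩⟩
  rw [h]
  exact isOpen_kelleyEx_singleton hbasis hinf h1
end
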